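/- arXiv:1604.00699 — 12 statements merged into one kernel-verified Lean document; each statement's English description precedes it below -/
import Mathlib

section
/- For any two projection operators f and g on a complex Hilbert space, ‖f∘g‖ − ‖f∘g‖² ≤ ‖f∘g − g∘f‖. -/
open ContinuousLinearMap

/-!
The commutator sandwiched between two idempotents measures how far their product is from
being idempotent: `f (f g - g f) g = f g - (f g)²`. Projections have norm at most `1`, so
`‖f g‖ - ‖f g‖² ≤ ‖f g - (f g)²‖ ≤ ‖f g - g f‖`.
-/

theorem IsIdempotentElem.mul_commutator_mul {R : Type*} [NonUnitalRing R] {p q : R}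
    (hp : IsIdempotentElem p) (hq : IsIdempotentElem q) :
    p * (p * q - q * p) * q = p * q - p * q * (p * q) := by
  rw [mul_sub, sub_mul, ← mul_assoc, hp.eq, mul_assoc, hq.eq, mul_assoc, mul_assoc, mul_assoc]

theorem IsIdempotentElem.norm_mul_sub_sq_le_norm_commutator {R : Type*} [NonUnitalNormedRing R]
    {p q : R} (hp : IsIdempotentElem p) (hq : IsIdempotentElem q) (hp₁ : ‖p‖ ≤ 1)
    (hq₁ : ‖q‖ ≤ 1) : ‖p * q‖ - ‖p * q‖ ^ 2 ≤ ‖p * q - q * p‖ :=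
  calc ‖p * q‖ - ‖p * q‖ ^ 2
      ≤ ‖p * q‖ - ‖p * q * (p * q)‖ := by rw [sq]; gcongr; exact norm_mul_le _ _
    _ ≤ ‖p * q - p * q * (p * q)‖ := norm_sub_norm_le _ _
    _ = ‖p * (p * q - q * p) * q‖ := by rw [hp.mul_commutator_mul hq]
    _ ≤ ‖p‖ * ‖p * q - q * p‖ * ‖q‖ := norm_mul₃_le
    _ ≤ 1 * ‖p * q - q * p‖ * 1 := by gcongr
    _ = ‖p * q - q * p‖ := by ring

theorem IsStarProjection.norm_mul_sub_sq_le_norm_commutator {R : Type*} [NonUnitalNormedRing R]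
    [StarRing R] [CStarRing R] {p q : R} (hp : IsStarProjection p) (hq : IsStarProjection q) :
    ‖p * q‖ - ‖p * q‖ ^ 2 ≤ ‖p * q - q * p‖ :=
  hp.isIdempotentElem.norm_mul_sub_sq_le_norm_commutator hq.isIdempotentElem (hp.norm_le p)
    (hq.norm_le q)

theorem commutator_norm_lower_bound
    {H : Type*} [NormedAddCommGroup H] [InnerProductSpace ℂ H] [CompleteSpace H]
    (f g : H →L[ℂ] H)
    (hf : f ∘L f = f) (hf' : adjoint f = f)
    (hg : g ∘L g = g) (hg' : adjoint g = g) :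
    ‖f ∘L g‖ - ‖f ∘L g‖ ^ 2 ≤ ‖f ∘L g - g ∘L f‖ :=
  IsStarProjection.norm_mul_sub_sq_le_norm_commutator
    ((isStarProjection_iff' (p := f)).2 ⟨hf, (star_eq_adjoint f).trans hf'⟩)
    ((isStarProjection_iff' (p := g)).2 ⟨hg, (star_eq_adjoint g).trans hg'⟩)
end

section
/- For any two projection operators f and g on a complex Hilbert space, ‖f∘g − g∘f‖ ≤ ‖f∘g‖. -/
/-!
Write `f g - g f = f g (1 - f) - (1 - f) g f`. The first summand maps into the range of `f`,
the second into its orthogonal complement, and they only see the components of a vector in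
the complement and in the range of `f` respectively; so the norm of the sum is at most the
larger of the two norms. These are equal, `(1 - f) g f` being the adjoint of `f g (1 - f)`, and
`‖f g (1 - f)‖ ≤ ‖f g‖` because `1 - f` is a projection.
-/

open ContinuousLinearMap

namespace IsStarProjection

variable {𝕜 E : Type*} [RCLike 𝕜] [NormedAddCommGroup E] [InnerProductSpace 𝕜 E] [CompleteSpace E]
  {p : E →L[𝕜] E}

theorem inner_apply_one_sub_apply (hp : IsStarProjection p) (u v : E) :
    inner 𝕜 (p u) ((1 - p) v) = 0 := by
  rw [← adjoint_inner_right, ← star_eq_adjoint, hp.isSelfAdjoint.star_eq, ← mul_apply_eq_comp,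
    hp.mul_one_sub_self, zero_apply, inner_zero_right]

theorem norm_sq_eq_add (hp : IsStarProjection p) (x : E) :
    ‖x‖ ^ 2 = ‖p x‖ ^ 2 + ‖(1 - p) x‖ ^ 2 := by
  have hx : x = p x + (1 - p) x := by simp
  conv_lhs => rw [hx]
  rw [sq, sq, sq,
    norm_add_sq_eq_norm_sq_add_norm_sq_of_inner_eq_zero _ _ (hp.inner_apply_one_sub_apply x x)]

/-- Norm of an operator whose block matrix with respect to `p` has zero diagonal. -/
theorem norm_mul_mul_one_sub_add_le (hp : IsStarProjection p) (a b : E →L[𝕜] E) :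
    ‖p * a * (1 - p) + (1 - p) * b * p‖ ≤ max ‖p * a * (1 - p)‖ ‖(1 - p) * b * p‖ := by
  set K := max ‖p * a * (1 - p)‖ ‖(1 - p) * b * p‖
  have hK : 0 ≤ K := le_max_of_le_left (norm_nonneg _)
  refine opNorm_le_bound _ hK fun x => ?_
  have hA : ‖(p * a * (1 - p)) x‖ ≤ K * ‖(1 - p) x‖ := by
    calc ‖(p * a * (1 - p)) x‖ = ‖(p * a * (1 - p)) ((1 - p) x)‖ := by
          rw [← mul_apply_eq_comp, mul_assoc _ (1 - p), hp.one_sub.isIdempotentElem.eq]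
      _ ≤ K * ‖(1 - p) x‖ := le_of_opNorm_le _ (le_max_left _ _) _
  have hB : ‖((1 - p) * b * p) x‖ ≤ K * ‖p x‖ := by
    calc ‖((1 - p) * b * p) x‖ = ‖((1 - p) * b * p) (p x)‖ := by
          rw [← mul_apply_eq_comp, mul_assoc _ p, hp.isIdempotentElem.eq]
      _ ≤ K * ‖p x‖ := le_of_opNorm_le _ (le_max_right _ _) _
  have horth : inner 𝕜 ((p * a * (1 - p)) x) (((1 - p) * b * p) x) = 0 :=
    hp.inner_apply_one_sub_apply _ _
  have hsq : ‖(p * a * (1 - p) + (1 - p) * b * p) x‖ ^ 2 ≤ (K * ‖x‖) ^ 2 := by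
    calc ‖(p * a * (1 - p) + (1 - p) * b * p) x‖ ^ 2
        = ‖(p * a * (1 - p)) x‖ ^ 2 + ‖((1 - p) * b * p) x‖ ^ 2 := by
          rw [add_apply, sq, sq, sq, norm_add_sq_eq_norm_sq_add_norm_sq_of_inner_eq_zero _ _ horth]
      _ ≤ (K * ‖(1 - p) x‖) ^ 2 + (K * ‖p x‖) ^ 2 := by gcongr
      _ = (K * ‖x‖) ^ 2 := by rw [mul_pow, mul_pow, mul_pow, hp.norm_sq_eq_add x]; ring
  exact (pow_le_pow_iff_left₀ (norm_nonneg _) (by positivity) two_ne_zero).mp hsq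

end IsStarProjection

theorem commutator_norm_upper_bound_general
    {H : Type*} [NormedAddCommGroup H] [InnerProductSpace ℂ H] [CompleteSpace H]
    (f g : H →L[ℂ] H)
    (hf : f ∘L f = f) (hf' : adjoint f = f)
    (hg' : adjoint g = g) :
    ‖f ∘L g - g ∘L f‖ ≤ ‖f ∘L g‖ := by
  have hproj : IsStarProjection f := ⟨hf, hf'⟩
  have hsplit : f ∘L g - g ∘L f = f * g * (1 - f) + (1 - f) * (-g) * f := by
    simp only [← mul_def]; noncomm_ring
  have hadjoint : ‖(1 - f) * (-g) * f‖ = ‖f * g * (1 - f)‖ := by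
    rw [← norm_star (f * g * (1 - f)), star_mul, star_mul, star_sub, star_one,
      star_eq_adjoint f, star_eq_adjoint g, hf', hg', mul_neg, neg_mul, norm_neg, mul_assoc]
  have hcorner : ‖f * g * (1 - f)‖ ≤ ‖f ∘L g‖ :=
    calc ‖f * g * (1 - f)‖ ≤ ‖f * g‖ * ‖1 - f‖ := norm_mul_le _ _
      _ ≤ ‖f * g‖ := mul_le_of_le_one_right (norm_nonneg _) (hproj.one_sub.norm_le _)
  rw [hsplit]
  refine (hproj.norm_mul_mul_one_sub_add_le g (-g)).trans ?_
  rw [hadjoint, max_self]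
  exact hcorner

theorem commutator_norm_upper_bound
    {H : Type*} [NormedAddCommGroup H] [InnerProductSpace ℂ H] [CompleteSpace H]
    (f g : H →L[ℂ] H)
    (hf : f ∘L f = f) (hf' : adjoint f = f)
    (hg : g ∘L g = g) (hg' : adjoint g = g) :
    ‖f ∘L g - g ∘L f‖ ≤ ‖f ∘L g‖ :=
  commutator_norm_upper_bound_general f g hf hf' hg'
end

section
/- For any two projection operators f and g on a complex Hilbert space and any natural number m ≥ 1, ‖(f∘g)^m‖ ≤ ‖f∘g‖^(2m−1). -/
open ContinuousLinearMap

/-! For `T = f g` with `f`, `g` projections, `T (T* T) = f g g f f g = T²`; hence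
`T^(n+2) = T^(n+1) (T* T)`, and the C⋆-identity `‖T* T‖ = ‖T‖²` lets every further power of
`T` cost only a factor `‖T‖²`. -/

theorem IsStarProjection.mul_mul_star_mul_self {R : Type*} [Semigroup R] [StarMul R] {p q : R}
    (hp : IsStarProjection p) (hq : IsStarProjection q) :
    p * q * (star (p * q) * (p * q)) = p * q * (p * q) := by
  rw [star_mul, hp.isSelfAdjoint.star_eq, hq.isSelfAdjoint.star_eq]
  calc p * q * (q * p * (p * q)) = p * (q * q) * ((p * p) * q) := by simp only [mul_assoc]
    _ = p * q * (p * q) := by rw [hp.isIdempotentElem.eq, hq.isIdempotentElem.eq, mul_assoc]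

theorem norm_pow_succ_le_of_mul_star_mul_self {A : Type*} [NormedRing A] [StarRing A]
    [CStarRing A] {a : A} (h : a * (star a * a) = a * a) (n : ℕ) :
    ‖a ^ (n + 1)‖ ≤ ‖a‖ ^ (2 * n + 1) := by
  induction n with
  | zero => simp
  | succ n ih =>
    have hstep : a ^ (n + 1) * (star a * a) = a ^ (n + 1 + 1) := by
      rw [pow_succ, mul_assoc, h, ← mul_assoc, ← pow_succ, ← pow_succ]
    calc ‖a ^ (n + 1 + 1)‖ = ‖a ^ (n + 1) * (star a * a)‖ := by rw [hstep]
      _ ≤ ‖a ^ (n + 1)‖ * ‖star a * a‖ := norm_mul_le _ _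
      _ ≤ ‖a‖ ^ (2 * n + 1) * ‖a‖ ^ 2 := by
        rw [CStarRing.norm_star_mul_self, ← sq]
        gcongr
      _ = ‖a‖ ^ (2 * (n + 1) + 1) := by ring

theorem norm_pow_fg_le
    {H : Type*} [NormedAddCommGroup H] [InnerProductSpace ℂ H] [CompleteSpace H]
    (f g : H →L[ℂ] H)
    (hf : f ∘L f = f) (hf' : adjoint f = f)
    (hg : g ∘L g = g) (hg' : adjoint g = g)
    (m : ℕ) (hm : 1 ≤ m) :
    ‖(f ∘L g) ^ m‖ ≤ ‖f ∘L g‖ ^ (2 * m - 1) := by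
  have hpf : IsStarProjection f := ⟨hf, by rwa [IsSelfAdjoint, star_eq_adjoint]⟩
  have hpg : IsStarProjection g := ⟨hg, by rwa [IsSelfAdjoint, star_eq_adjoint]⟩
  obtain ⟨n, rfl⟩ : ∃ n, m = n + 1 := ⟨m - 1, by omega⟩
  rw [show 2 * (n + 1) - 1 = 2 * n + 1 by omega]
  exact norm_pow_succ_le_of_mul_star_mul_self (hpf.mul_mul_star_mul_self hpg) n
end

section
/- For any two projection operators f and g on a complex Hilbert space, ‖f∘g + g∘f‖ ≤ ‖f∘g‖ + ‖f∘g‖². -/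
open ContinuousLinearMap

/-! Write `c = ‖f ∘ g‖`. For a projection `p`, `re ⟪p x, x⟫ = ‖p x‖²`, and
`⟪g x, f x⟫ = ⟪(f ∘ g) (g x), f x⟫`, so `‖⟪g x, f x⟫‖ ≤ c ‖g x‖ ‖f x‖`. Expanding the square
gives `‖(f + g) x‖² ≤ (1 + c) (‖f x‖² + ‖g x‖²) = (1 + c) re ⟪(f + g) x, x⟫`, whence
`‖f + g‖ ≤ 1 + c`. The anticommutator is self-adjoint with quadratic form `2 re ⟪g x, f x⟫`,
which is at most `2 c ‖f x‖ ‖g x‖ ≤ c re ⟪(f + g) x, x⟫ ≤ c (1 + c) ‖x‖²` in absolute value;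
the norm of a self-adjoint operator is the supremum of its quadratic form on the unit sphere. -/

section

open RCLike
open scoped InnerProductSpace

variable {𝕜 E : Type*} [RCLike 𝕜] [NormedAddCommGroup E] [InnerProductSpace 𝕜 E]

theorem LinearMap.IsSymmetric.mul_add_mul {S T : E →ₗ[𝕜] E} (hS : S.IsSymmetric)
    (hT : T.IsSymmetric) : (S * T + T * S).IsSymmetric := fun x y ↦ by
  simp only [LinearMap.add_apply, Module.End.mul_apply, inner_add_left, inner_add_right, hS _,
    hT _, add_comm]

namespace ContinuousLinearMap

theorem norm_le_of_abs_re_inner_le {T : E →L[𝕜] E} (hT : T.IsSymmetric) {M : ℝ} (hM : 0 ≤ M)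
    (h : ∀ x, |re ⟪T x, x⟫_𝕜| ≤ M * ‖x‖ ^ 2) : ‖T‖ ≤ M := by
  rw [norm_eq_iSup_rayleighQuotient T hT]
  refine ciSup_le fun x ↦ ?_
  rw [rayleighQuotient, reApplyInnerSelf_apply, abs_div, abs_sq]
  exact div_le_of_le_mul₀ (sq_nonneg _) hM (h x)

theorem re_inner_apply_self_le (T : E →L[𝕜] E) (x : E) : re ⟪T x, x⟫_𝕜 ≤ ‖T‖ * ‖x‖ ^ 2 :=
  calc re ⟪T x, x⟫_𝕜 ≤ ‖T x‖ * ‖x‖ := (re_le_norm _).trans (norm_inner_le_norm _ _)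
    _ ≤ ‖T‖ * ‖x‖ * ‖x‖ := by gcongr; exact T.le_opNorm x
    _ = ‖T‖ * ‖x‖ ^ 2 := by ring

end ContinuousLinearMap

namespace LinearMap.IsSymmetricProjection

variable {p q : E →L[𝕜] E}

theorem apply_apply (hp : p.IsSymmetricProjection) (x : E) : p (p x) = p x :=
  congr($(hp.isIdempotentElem) x)

theorem re_inner_apply_self (hp : p.IsSymmetricProjection) (x : E) :
    re ⟪p x, x⟫_𝕜 = ‖p x‖ ^ 2 := by
  conv_lhs => rw [← hp.apply_apply x, hp.isSymmetric.apply_clm]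
  exact inner_self_eq_norm_sq _

theorem re_inner_add_apply_self (hp : p.IsSymmetricProjection) (hq : q.IsSymmetricProjection)
    (x : E) : re ⟪(p + q) x, x⟫_𝕜 = ‖p x‖ ^ 2 + ‖q x‖ ^ 2 := by
  rw [_root_.add_apply, inner_add_left, map_add, hp.re_inner_apply_self, hq.re_inner_apply_self]

theorem norm_inner_apply_le (hp : p.IsSymmetricProjection) (hq : q.IsSymmetricProjection)
    (x : E) : ‖⟪q x, p x⟫_𝕜‖ ≤ ‖p ∘L q‖ * ‖q x‖ * ‖p x‖ := by
  have h : ⟪q x, p x⟫_𝕜 = ⟪(p ∘L q) (q x), p x⟫_𝕜 := by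
    rw [ContinuousLinearMap.comp_apply, hq.apply_apply, hp.isSymmetric.apply_clm, hp.apply_apply]
  rw [h]
  refine (norm_inner_le_norm _ _).trans ?_
  gcongr
  exact (p ∘L q).le_opNorm _

theorem norm_add_apply_sq_le (hp : p.IsSymmetricProjection) (hq : q.IsSymmetricProjection)
    (x : E) : ‖(p + q) x‖ ^ 2 ≤ (1 + ‖p ∘L q‖) * (‖p x‖ ^ 2 + ‖q x‖ ^ 2) := by
  have hre : re ⟪p x, q x⟫_𝕜 ≤ ‖p ∘L q‖ * ‖q x‖ * ‖p x‖ :=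
    (re_le_norm _).trans <| norm_inner_symm (𝕜 := 𝕜) (p x) (q x) ▸ hp.norm_inner_apply_le hq x
  rw [_root_.add_apply, norm_add_sq (𝕜 := 𝕜)]
  nlinarith [sq_nonneg (‖p x‖ - ‖q x‖), norm_nonneg (p ∘L q)]

theorem norm_add_le_one_add_norm_comp (hp : p.IsSymmetricProjection)
    (hq : q.IsSymmetricProjection) : ‖p + q‖ ≤ 1 + ‖p ∘L q‖ := by
  refine opNorm_le_bound _ (by positivity) fun x ↦ ?_
  have key : ‖(p + q) x‖ * ‖(p + q) x‖ ≤ (1 + ‖p ∘L q‖) * ‖x‖ * ‖(p + q) x‖ :=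
    calc ‖(p + q) x‖ * ‖(p + q) x‖ = ‖(p + q) x‖ ^ 2 := (sq _).symm
      _ ≤ (1 + ‖p ∘L q‖) * re ⟪(p + q) x, x⟫_𝕜 := by
        rw [hp.re_inner_add_apply_self hq]
        exact hp.norm_add_apply_sq_le hq x
      _ ≤ (1 + ‖p ∘L q‖) * (‖(p + q) x‖ * ‖x‖) := by
        gcongr
        exact (re_le_norm _).trans (norm_inner_le_norm _ _)
      _ = (1 + ‖p ∘L q‖) * ‖x‖ * ‖(p + q) x‖ := by ring
  rcases (norm_nonneg ((p + q) x)).eq_or_lt with h0 | hpos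
  · rw [← h0]; positivity
  · exact le_of_mul_le_mul_right key hpos

theorem re_inner_anticommutator_apply_self (hp : p.IsSymmetricProjection)
    (hq : q.IsSymmetricProjection) (x : E) :
    re ⟪(p ∘L q + q ∘L p) x, x⟫_𝕜 = 2 * re ⟪q x, p x⟫_𝕜 := by
  rw [_root_.add_apply, ContinuousLinearMap.comp_apply, ContinuousLinearMap.comp_apply,
    inner_add_left, map_add, hp.isSymmetric.apply_clm (q x), hq.isSymmetric.apply_clm (p x),
    inner_re_symm (p x)]
  ring

theorem abs_re_inner_anticommutator_apply_self_le (hp : p.IsSymmetricProjection)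
    (hq : q.IsSymmetricProjection) (x : E) :
    |re ⟪(p ∘L q + q ∘L p) x, x⟫_𝕜| ≤ (‖p ∘L q‖ + ‖p ∘L q‖ ^ 2) * ‖x‖ ^ 2 := by
  set c := ‖p ∘L q‖
  have hc : 0 ≤ c := norm_nonneg _
  calc |re ⟪(p ∘L q + q ∘L p) x, x⟫_𝕜| = 2 * |re ⟪q x, p x⟫_𝕜| := by
        rw [hp.re_inner_anticommutator_apply_self hq, abs_mul, abs_two]
    _ ≤ 2 * (c * ‖q x‖ * ‖p x‖) := by
        gcongr
        exact (abs_re_le_norm _).trans (hp.norm_inner_apply_le hq x)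
    _ ≤ c * (‖p x‖ ^ 2 + ‖q x‖ ^ 2) := by nlinarith [sq_nonneg (‖p x‖ - ‖q x‖)]
    _ = c * re ⟪(p + q) x, x⟫_𝕜 := by rw [hp.re_inner_add_apply_self hq]
    _ ≤ c * (‖p + q‖ * ‖x‖ ^ 2) := by gcongr; exact re_inner_apply_self_le _ x
    _ ≤ c * ((1 + c) * ‖x‖ ^ 2) := by gcongr; exact hp.norm_add_le_one_add_norm_comp hq
    _ = (c + c ^ 2) * ‖x‖ ^ 2 := by ring

end LinearMap.IsSymmetricProjection

end

theorem anticommutator_norm_le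
    {H : Type*} [NormedAddCommGroup H] [InnerProductSpace ℂ H] [CompleteSpace H]
    (f g : H →L[ℂ] H)
    (hf : f ∘L f = f) (hf' : adjoint f = f)
    (hg : g ∘L g = g) (hg' : adjoint g = g) :
    ‖f ∘L g + g ∘L f‖ ≤ ‖f ∘L g‖ + ‖f ∘L g‖ ^ 2 := by
  have hfp : f.IsSymmetricProjection :=
    isStarProjection_iff_isSymmetricProjection.mp ⟨hf, (star_eq_adjoint f).trans hf'⟩
  have hgp : g.IsSymmetricProjection :=
    isStarProjection_iff_isSymmetricProjection.mp ⟨hg, (star_eq_adjoint g).trans hg'⟩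
  exact norm_le_of_abs_re_inner_le (hfp.isSymmetric.mul_add_mul hgp.isSymmetric) (by positivity)
    (hfp.abs_re_inner_anticommutator_apply_self_le hgp)
end

section
/- For any two projection operators f and g on a complex Hilbert space, ‖f∘g + g∘f‖ ≥ ‖f∘g‖ + ‖f∘g‖². -/
open ContinuousLinearMap
open scoped InnerProductSpace ComplexConjugate

private lemma key_vector_bound
    {H : Type*} [NormedAddCommGroup H] [InnerProductSpace ℂ H] [CompleteSpace H]
    (f g : H →L[ℂ] H)
    (hf : f ∘L f = f) (hf' : adjoint f = f)
    (hg : g ∘L g = g) (hg' : adjoint g = g)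
    (x : H) (hx : ‖x‖ = 1) (hfx : f x = x) (hgx : g x ≠ 0) :
    ‖g x‖ + ‖g x‖ ^ 2 ≤ ‖f ∘L g + g ∘L f‖ := by
  set A := f ∘L g + g ∘L f with hA
  set u := g x with hu
  set s := ‖g x‖ with hs
  set a := ‖f u‖ with ha
  have hs0 : 0 < s := norm_pos_iff.mpr hgx
  have hgg : ∀ y, g (g y) = g y := fun y => by rw [← comp_apply, hg]
  have hff : ∀ y, f (f y) = f y := fun y => by rw [← comp_apply, hf]
  have hgadj : ∀ v w : H, ⟪g v, w⟫_ℂ = ⟪v, g w⟫_ℂ := fun v w => by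
    have := adjoint_inner_left g w v
    rwa [hg'] at this
  have hfadj : ∀ v w : H, ⟪f v, w⟫_ℂ = ⟪v, f w⟫_ℂ := fun v w => by
    have := adjoint_inner_left f w v
    rwa [hf'] at this
  have huu : ⟪u, u⟫_ℂ = ((s : ℂ))^2 := by
    rw [inner_self_eq_norm_sq_to_K]; norm_cast
  have hxu : ⟪x, u⟫_ℂ = ((s : ℂ))^2 := by
    rw [← huu]
    rw [hu, hgadj, hgg]
  have hux : ⟪u, x⟫_ℂ = ((s : ℂ))^2 := by
    rw [← inner_conj_symm, hxu]
    simp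
  have hxx : ⟪x, x⟫_ℂ = 1 := by
    rw [inner_self_eq_norm_sq_to_K, hx]; norm_num
  have hufu : ⟪u, f u⟫_ℂ = ((a : ℂ))^2 := by
    have : ⟪f u, f u⟫_ℂ = ⟪u, f u⟫_ℂ := by rw [hfadj, hff]
    rw [← this, inner_self_eq_norm_sq_to_K]; norm_cast
  have hxfu : ⟪x, f u⟫_ℂ = ((s : ℂ))^2 := by
    rw [← hfadj, hfx, hxu]
  have hxgfu : ⟪x, g (f u)⟫_ℂ = ((a : ℂ))^2 := by
    rw [← hgadj, ← hu, hufu]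
  have hugfu : ⟪u, g (f u)⟫_ℂ = ((a : ℂ))^2 := by
    rw [← hgadj, hu, hgg, ← hu, hufu]
  have hgu : g u = u := hgg x
  -- Cauchy-Schwarz: s^2 ≤ a
  have hsa : s^2 ≤ a := by
    have h1 : ‖⟪x, f u⟫_ℂ‖ ≤ ‖x‖ * ‖f u‖ := norm_inner_le_norm x (f u)
    rw [hxfu, hx, one_mul] at h1
    calc s^2 = ‖((s:ℂ))^2‖ := by
              rw [norm_pow, Complex.norm_real]
              rw [Real.norm_of_nonneg hs0.le]
         _ ≤ a := h1
  set z : H := (s : ℂ) • x + u with hz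
  have hAz : A z = ((s : ℂ) + 1) • f u + (s : ℂ) • u + g (f u) := by
    simp only [hA, hz, add_apply, comp_apply, map_add, map_smul, hfx, hgg, hgu, ← hu]
    module
  have hinner : ⟪z, A z⟫_ℂ = ((2*s^3*(s+1) + 2*a^2*(s+1) : ℝ) : ℂ) := by
    rw [hAz, hz]
    simp only [inner_add_left, inner_add_right, inner_smul_left, inner_smul_right,
      hxx, hxu, hux, huu, hufu, hxfu, hxgfu, hugfu]
    push_cast
    ring_nf
    simp [Complex.conj_ofReal]
    ring
  have hznorm : ‖z‖^2 = 2*s^2*(s+1) := by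
    have h1 : ⟪z, z⟫_ℂ = ((2*s^2*(s+1) : ℝ) : ℂ) := by
      rw [hz]
      simp only [inner_add_left, inner_add_right, inner_smul_left, inner_smul_right,
        hxx, hxu, hux, huu]
      push_cast
      simp [Complex.conj_ofReal]
      ring
    have h2 : ⟪z, z⟫_ℂ = ((‖z‖^2 : ℝ) : ℂ) := by
      rw [inner_self_eq_norm_sq_to_K]; norm_cast
    rw [h2] at h1
    exact_mod_cast h1
  -- main chain
  have hchain : (s + s^2) * (2*s^2*(s+1)) ≤ ‖A‖ * (2*s^2*(s+1)) := by
    have h1 : (s + s^2) * (2*s^2*(s+1)) ≤ 2*s^3*(s+1) + 2*a^2*(s+1) := by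
      nlinarith [hs0.le, hsa, sq_nonneg s, sq_nonneg (a - s^2)]
    have h2 : 2*s^3*(s+1) + 2*a^2*(s+1) ≤ ‖⟪z, A z⟫_ℂ‖ := by
      rw [hinner]
      rw [Complex.norm_real]
      exact le_abs_self _
    have h3 : ‖⟪z, A z⟫_ℂ‖ ≤ ‖z‖ * ‖A z‖ := norm_inner_le_norm z (A z)
    have h4 : ‖A z‖ ≤ ‖A‖ * ‖z‖ := le_opNorm A z
    have h5 : ‖z‖ * ‖A z‖ ≤ ‖A‖ * ‖z‖^2 := by
      calc ‖z‖ * ‖A z‖ ≤ ‖z‖ * (‖A‖ * ‖z‖) := by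
            exact mul_le_mul_of_nonneg_left h4 (norm_nonneg z)
        _ = ‖A‖ * ‖z‖^2 := by ring
    rw [hznorm] at h5
    linarith
  have hpos : 0 < 2*s^2*(s+1) := by positivity
  have := le_of_mul_le_mul_right hchain hpos
  linarith

theorem anticommutator_norm_ge
    {H : Type*} [NormedAddCommGroup H] [InnerProductSpace ℂ H] [CompleteSpace H]
    (f g : H →L[ℂ] H)
    (hf : f ∘L f = f) (hf' : adjoint f = f)
    (hg : g ∘L g = g) (hg' : adjoint g = g) :
    ‖f ∘L g + g ∘L f‖ ≥ ‖f ∘L g‖ + ‖f ∘L g‖ ^ 2 := by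
  set t := ‖f ∘L g‖ with ht
  rcases (norm_nonneg (f ∘L g)).eq_or_lt with h0 | htpos
  · have ht0 : t = 0 := by rw [ht, ← h0]
    rw [ge_iff_le, ht0]
    simp only [ne_eq, OfNat.ofNat_ne_zero, not_false_eq_true, zero_pow, add_zero]
    exact norm_nonneg (f ∘L g + g ∘L f)
  · -- t > 0
    have hff : ∀ y, f (f y) = f y := fun y => by rw [← comp_apply, hf]
    have hfadj : ∀ v w : H, ⟪f v, w⟫_ℂ = ⟪v, f w⟫_ℂ := fun v w => by
      have := adjoint_inner_left f w v
      rwa [hf'] at this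
    have hfcontr : ∀ y, ‖f y‖ ≤ ‖y‖ := by
      intro y
      rcases eq_or_ne (f y) 0 with h | h
      · simp [h]
      · have h1 : ‖f y‖^2 = Complex.re ⟪y, f y⟫_ℂ := by
          have : ⟪f y, f y⟫_ℂ = ⟪y, f y⟫_ℂ := by rw [hfadj, hff]
          rw [← this, inner_self_eq_norm_sq_to_K]
          norm_cast
        have h2 : Complex.re ⟪y, f y⟫_ℂ ≤ ‖y‖ * ‖f y‖ := by
          calc Complex.re ⟪y, f y⟫_ℂ ≤ ‖⟪y, f y⟫_ℂ‖ := (RCLike.abs_re_le_norm _).trans' (le_abs_self _)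
            _ ≤ ‖y‖ * ‖f y‖ := norm_inner_le_norm _ _
        have hfy : 0 < ‖f y‖ := norm_pos_iff.mpr h
        nlinarith
    have hnorm_gf : ‖g ∘L f‖ = t := by
      have hadj : adjoint (g ∘L f) = f ∘L g := by rw [adjoint_comp, hf', hg']
      rw [ht, ← hadj]
      exact (LinearIsometryEquiv.norm_map (adjoint (𝕜 := ℂ)) (g ∘L f)).symm
    rw [ge_iff_le]
    refine le_of_forall_pos_le_add ?_
    intro ε hε
    set δ := min (ε / (1 + 2*t)) (t/2) with hδ
    have hδ0 : 0 < δ := lt_min (div_pos hε (by linarith)) (by linarith)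
    have hδt : δ ≤ t/2 := min_le_right _ _
    have hδε : δ * (1 + 2*t) ≤ ε := by
      have h := min_le_left (ε / (1 + 2*t)) (t/2)
      rw [hδ]
      calc min (ε / (1 + 2*t)) (t/2) * (1 + 2*t) ≤ (ε / (1 + 2*t)) * (1 + 2*t) :=
            mul_le_mul_of_nonneg_right h (by linarith)
        _ = ε := div_mul_cancel₀ ε (by linarith)
    have hlt : t - δ < ‖g ∘L f‖ := by rw [hnorm_gf]; linarith
    obtain ⟨y, hy1, hy2⟩ := exists_lt_apply_of_lt_opNorm (g ∘L f) hlt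
    rw [comp_apply] at hy2
    have hfy : f y ≠ 0 := by
      intro h
      rw [h, map_zero, norm_zero] at hy2
      linarith
    have hfynorm : 0 < ‖f y‖ := norm_pos_iff.mpr hfy
    set x : H := (‖f y‖ : ℂ)⁻¹ • f y with hxdef
    have hxnorm : ‖x‖ = 1 := by
      rw [hxdef, norm_smul]
      rw [norm_inv, Complex.norm_real, Real.norm_of_nonneg hfynorm.le]
      field_simp
    have hfx : f x = x := by
      rw [hxdef, map_smul, hff]
    have hgx_lb : t - δ < ‖g x‖ := by
      have : ‖g x‖ = ‖f y‖⁻¹ * ‖g (f y)‖ := by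
        rw [hxdef, map_smul, norm_smul, norm_inv, Complex.norm_real,
          Real.norm_of_nonneg hfynorm.le]
      rw [this]
      have hfyle : ‖f y‖ ≤ 1 := le_trans (hfcontr y) hy1.le
      have h1 : 1 ≤ ‖f y‖⁻¹ := (one_le_inv₀ hfynorm).2 hfyle
      calc t - δ < ‖g (f y)‖ := hy2
        _ = 1 * ‖g (f y)‖ := (one_mul _).symm
        _ ≤ ‖f y‖⁻¹ * ‖g (f y)‖ := mul_le_mul_of_nonneg_right h1 (norm_nonneg _)
    have hgx_ne : g x ≠ 0 := by
      intro h
      rw [h, norm_zero] at hgx_lb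
      linarith
    have hkey := key_vector_bound f g hf hf' hg hg' x hxnorm hfx hgx_ne
    set s := ‖g x‖ with hsdef
    have hst : s ≤ t := by
      have : ‖g (f x)‖ ≤ ‖g ∘L f‖ * ‖x‖ := by
        rw [← comp_apply]; exact le_opNorm _ _
      rw [hfx, hxnorm, mul_one, hnorm_gf] at this
      exact this
    nlinarith [hgx_lb, hst, hδ0.le, hδε, hkey, htpos.le]
end

section
/- Let P_n, Q_n ∈ ℂ[X] be the polynomials defined recursively by P₁(x) = x, Q₁(x) = 0, P_{n+1}(x) = x·P_n(x) + x·Q_n(x), and Q_{n+1}(x) = P_n(x) + x·Q_n(x). Then for any two projection operators f and g on a complex Hilbert space and any n ≥ 1, (f∘g + g∘f)^n = P_n(f∘g) + P_n(g∘f) + Q_n(f∘g∘f) + Q_n(g∘f∘g), where a polynomial is applied to an operator via the polynomial functional calculus (aeval) on the algebra of bounded operators. -/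
open ContinuousLinearMap Polynomial

lemma mul_aeval_eq_of {A : Type*} [Ring A] [Algebra ℂ A] (z y : A)
    (h : z * y = z * z) (p : Polynomial ℂ) : z * aeval y p = z * aeval z p := by
  have key : ∀ k : ℕ, z * y ^ k = z * z ^ k := by
    intro k
    induction k with
    | zero => simp
    | succ k ih =>
      rw [pow_succ', ← mul_assoc, h, mul_assoc, ih, pow_succ', ← mul_assoc]
  induction p using Polynomial.induction_on' with
  | add p q hp hq => simp [mul_add, hp, hq]
  | monomial n a =>
    rw [aeval_monomial, aeval_monomial, Algebra.commutes, ← mul_assoc, key,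
      mul_assoc, ← Algebra.commutes]

theorem anticommutator_pow_eq_poly
    {H : Type*} [NormedAddCommGroup H] [InnerProductSpace ℂ H] [CompleteSpace H]
    (f g : H →L[ℂ] H)
    (hf : f ∘L f = f) (hf' : adjoint f = f)
    (hg : g ∘L g = g) (hg' : adjoint g = g)
    (P Q : ℕ → Polynomial ℂ)
    (hP1 : P 1 = X) (hQ1 : Q 1 = 0)
    (hP : ∀ n, 1 ≤ n → P (n + 1) = X * P n + X * Q n)
    (hQ : ∀ n, 1 ≤ n → Q (n + 1) = P n + X * Q n)
    (n : ℕ) (hn : 1 ≤ n) :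
    (f ∘L g + g ∘L f) ^ n =
      aeval (f ∘L g) (P n) + aeval (g ∘L f) (P n) +
      aeval (f ∘L g ∘L f) (Q n) + aeval (g ∘L f ∘L g) (Q n) := by
  simp only [← ContinuousLinearMap.mul_def] at *
  set a := f * g with ha
  set b := g * f with hb
  set c := f * (g * f) with hc
  set d := g * (f * g) with hd
  have hf2 : ∀ x : H →L[ℂ] H, f * (f * x) = f * x := fun x => by
    rw [← mul_assoc, hf]
  have hg2 : ∀ x : H →L[ℂ] H, g * (g * x) = g * x := fun x => by
    rw [← mul_assoc, hg]
  have hab : a * b = c := by simp only [ha, hb, hc, mul_assoc, hf2, hg2]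
  have hcb : c * b = c * c := by simp only [ha, hb, hc, mul_assoc, hf2, hg2]
  have hac : a * c = c * c := by simp only [ha, hc, mul_assoc, hf2, hg2]
  have hba : b * a = d := by simp only [ha, hb, hd, mul_assoc, hf2, hg2]
  have hda : d * a = d * d := by simp only [ha, hd, mul_assoc, hf2, hg2]
  have hbc : b * c = b * b := by simp only [hb, hc, mul_assoc, hf2, hg2]
  have had : a * d = a * a := by simp only [ha, hd, mul_assoc, hf2, hg2]
  have hbd : b * d = d * d := by simp only [hb, hd, mul_assoc, hf2, hg2]
  have hdvd : ∀ m, 1 ≤ m → X ∣ P m ∧ X ∣ Q m := by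
    intro m hm
    induction m, hm using Nat.le_induction with
    | base => rw [hP1, hQ1]; exact ⟨dvd_refl X, dvd_zero X⟩
    | succ m hm ih =>
      rw [hP m hm, hQ m hm]
      exact ⟨dvd_add (dvd_mul_right X _) (dvd_mul_right X _),
        dvd_add ih.1 (dvd_mul_right X _)⟩
  induction n, hn using Nat.le_induction with
  | base => simp [hP1, hQ1]
  | succ n hn ih =>
    obtain ⟨⟨r, hr⟩, ⟨s, hs⟩⟩ := hdvd n hn
    have e1 : a * aeval b (P n) = aeval c (P n) := by
      rw [hr, aeval_mul, aeval_X, aeval_mul, aeval_X, ← mul_assoc, hab,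
        mul_aeval_eq_of c b hcb]
    have e2 : a * aeval c (Q n) = c * aeval c (Q n) := by
      rw [hs, aeval_mul, aeval_X, ← mul_assoc, hac, mul_assoc]
    have e3 : a * aeval d (Q n) = a * aeval a (Q n) := by
      rw [hs, aeval_mul, aeval_X, aeval_mul, aeval_X, ← mul_assoc, had,
        mul_assoc, mul_aeval_eq_of a d had]
    have e4 : b * aeval a (P n) = aeval d (P n) := by
      rw [hr, aeval_mul, aeval_X, aeval_mul, aeval_X, ← mul_assoc, hba,
        mul_aeval_eq_of d a hda]
    have e5 : b * aeval c (Q n) = b * aeval b (Q n) := by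
      rw [hs, aeval_mul, aeval_X, aeval_mul, aeval_X, ← mul_assoc, hbc,
        mul_assoc, mul_aeval_eq_of b c hbc]
    have e6 : b * aeval d (Q n) = d * aeval d (Q n) := by
      rw [hs, aeval_mul, aeval_X, ← mul_assoc, hbd, mul_assoc]
    rw [pow_succ', ih, hP n hn, hQ n hn]
    simp only [map_add, aeval_mul, aeval_X]
    simp only [mul_add, add_mul, e1, e2, e3, e4, e5, e6]
    abel
end

section
/- Let P_n ∈ ℂ[X] be defined recursively together with Q_n by P₁(x) = x, Q₁(x) = 0, P_{n+1}(x) = x·P_n(x) + x·Q_n(x), Q_{n+1}(x) = P_n(x) + x·Q_n(x). Then for every N ≥ 1, P_{2N}(x) = Σ_{ℓ=1}^{N} C(2N−1, 2ℓ−1) x^{N+ℓ} as polynomials in ℂ[X]. -/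
/-!
Substitute `X = y²` (via `expand 2`). Then `P_n(y²) + y·Q_n(y²)` and `P_n(y²) - y·Q_n(y²)` are
geometric with ratios `y(y + 1)` and `y(y - 1)`, so
`2·P_n(y²) = y^(n+1)·((y + 1)^(n-1) + (y - 1)^(n-1))`. For `n = 2N` the even powers of `y`
cancel in the binomial expansions and the odd ones double, which is the claimed formula in `y²`.
-/

open Polynomial Finset

theorem Finset.sum_range_two_mul {M : Type*} [AddCommMonoid M] (f : ℕ → M) (n : ℕ) :
    ∑ j ∈ range (2 * n), f j = ∑ i ∈ range n, (f (2 * i) + f (2 * i + 1)) := by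
  induction n with
  | zero => simp
  | succ n ih => rw [mul_add_one, sum_range_succ, sum_range_succ, sum_range_succ, ih, add_assoc]

theorem add_one_pow_add_sub_one_pow_odd {R : Type*} [CommRing R] (x : R) (N : ℕ) :
    (x + 1) ^ (2 * N + 1) + (x - 1) ^ (2 * N + 1) =
      2 * ∑ i ∈ range (N + 1), ((2 * N + 1).choose (2 * i + 1) : R) * x ^ (2 * i + 1) := by
  rw [sub_eq_add_neg, add_pow, add_pow, ← sum_add_distrib, show 2 * N + 1 + 1 = 2 * (N + 1) by ring,
    sum_range_two_mul, mul_sum]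
  refine sum_congr rfl fun i hi => ?_
  have hi : i ≤ N := Nat.lt_succ_iff.mp (mem_range.mp hi)
  rw [Odd.neg_one_pow ⟨N - i, by omega⟩, Even.neg_one_pow ⟨N - i, by omega⟩]
  simp only [one_pow]
  ring

theorem expand_add_X_mul_expand_and_sub {R : Type*} [CommRing R] {P Q : ℕ → R[X]}
    (hP1 : P 1 = X) (hQ1 : Q 1 = 0)
    (hP : ∀ n, 1 ≤ n → P (n + 1) = X * P n + X * Q n)
    (hQ : ∀ n, 1 ≤ n → Q (n + 1) = P n + X * Q n) (k : ℕ) :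
    expand R 2 (P (k + 1)) + X * expand R 2 (Q (k + 1)) = X ^ (k + 2) * (X + 1) ^ k ∧
      expand R 2 (P (k + 1)) - X * expand R 2 (Q (k + 1)) = X ^ (k + 2) * (X - 1) ^ k := by
  induction k with
  | zero => simp [hP1, hQ1]
  | succ k ih =>
    obtain ⟨ih_add, ih_sub⟩ := ih
    rw [hP _ k.succ_pos, hQ _ k.succ_pos]
    simp only [map_add, map_mul, expand_X]
    exact ⟨by linear_combination X * (X + 1) * ih_add, by linear_combination X * (X - 1) * ih_sub⟩

theorem P_even_closed_form
    (P Q : ℕ → Polynomial ℂ)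
    (hP1 : P 1 = X) (hQ1 : Q 1 = 0)
    (hP : ∀ n, 1 ≤ n → P (n + 1) = X * P n + X * Q n)
    (hQ : ∀ n, 1 ≤ n → Q (n + 1) = P n + X * Q n)
    (N : ℕ) (hN : 1 ≤ N) :
    P (2 * N) = ∑ ℓ ∈ Finset.Icc 1 N,
      (Nat.choose (2 * N - 1) (2 * ℓ - 1) : Polynomial ℂ) * X ^ (N + ℓ) := by
  obtain ⟨M, rfl⟩ : ∃ M, N = M + 1 := ⟨N - 1, by omega⟩
  have hreindex :
      ∑ ℓ ∈ Icc 1 (M + 1), ((2 * (M + 1) - 1).choose (2 * ℓ - 1) : ℂ[X]) * X ^ (M + 1 + ℓ) =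
        ∑ i ∈ range (M + 1), ((2 * M + 1).choose (2 * i + 1) : ℂ[X]) * X ^ (M + 2 + i) := by
    rw [← Ico_add_one_right_eq_Icc, range_eq_Ico, ← zero_add 1, ← sum_Ico_add']
    refine sum_congr rfl fun i _ => ?_
    rw [show 2 * (M + 1) - 1 = 2 * M + 1 by omega, show 2 * (i + 1) - 1 = 2 * i + 1 by omega,
      show M + 1 + (i + 1) = M + 2 + i by ring]
  have htwo_mul : 2 * expand ℂ 2 (P (2 * M + 1 + 1)) =
      X ^ (2 * M + 3) * ((X + 1) ^ (2 * M + 1) + (X - 1) ^ (2 * M + 1)) := by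
    obtain ⟨hadd, hsub⟩ := expand_add_X_mul_expand_and_sub hP1 hQ1 hP hQ (2 * M + 1)
    linear_combination hadd + hsub
  rw [hreindex]
  apply expand_injective two_pos
  apply mul_left_cancel₀ (two_ne_zero : (2 : ℂ[X]) ≠ 0)
  rw [show 2 * (M + 1) = 2 * M + 1 + 1 by ring, htwo_mul, add_one_pow_add_sub_one_pow_odd]
  simp only [map_sum, map_mul, map_natCast, map_pow, expand_X, mul_sum]
  refine sum_congr rfl fun i _ => ?_
  ring
end

section
/- Let Q_n ∈ ℂ[X] be defined recursively together with P_n by P₁(x) = x, Q₁(x) = 0, P_{n+1}(x) = x·P_n(x) + x·Q_n(x), Q_{n+1}(x) = P_n(x) + x·Q_n(x). Then for every N ≥ 1, Q_{2N}(x) = Σ_{ℓ=0}^{N−1} C(2N−1, 2ℓ) x^{N+ℓ} as polynomials in ℂ[X]. -/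
open Polynomial

/-!
Writing `P_{n+1} = ∑_{i+j=n} C(n, 2j) X^{i+1}` and `Q_{n+1} = ∑_{i+j=n} C(n, 2j+1) X^i`, the
recursion becomes Pascal's rule `C(n+1, k+1) = C(n, k) + C(n, k+1)`. For `n = 2N - 1` only the terms
with `j ≤ N - 1` survive, and `C(2N-1, 2j+1) = C(2N-1, 2(N-1-j))` by symmetry.
-/

open Finset Finset.Nat

section ClosedForm

variable {R : Type*} [CommSemiring R]

-- `closedP n` and `closedQ n` are the closed forms of `P_{n+1}` and `Q_{n+1}`, not of `P_n`, `Q_n`.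
noncomputable def closedP (n : ℕ) : R[X] :=
  ∑ p ∈ antidiagonal n, (n.choose (2 * p.2) : R[X]) * X ^ (p.1 + 1)

noncomputable def closedQ (n : ℕ) : R[X] :=
  ∑ p ∈ antidiagonal n, (n.choose (2 * p.2 + 1) : R[X]) * X ^ p.1

theorem closedQ_succ (n : ℕ) : (closedQ (n + 1) : R[X]) = closedP n + X * closedQ n := by
  rw [closedQ, sum_antidiagonal_succ, closedP, closedQ, mul_sum, ← sum_add_distrib,
    Nat.choose_eq_zero_of_lt (by omega : n + 1 < 2 * (n + 1) + 1)]
  simp only [Nat.cast_zero, zero_mul, zero_add]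
  refine sum_congr rfl fun p _ => ?_
  rw [Nat.choose_succ_succ]
  push_cast
  ring

-- Both sides equal `∑_{i+j=n+1} C(n, 2j) X^{i+1}`, split at either endpoint.
theorem X_mul_closedP (n : ℕ) :
    (X * closedP n : R[X]) =
      X ^ (n + 2) + ∑ p ∈ antidiagonal n, (n.choose (2 * p.2 + 2) : R[X]) * X ^ (p.1 + 1) := by
  have hfirst := sum_antidiagonal_succ (n := n)
    (f := fun p => (n.choose (2 * p.2) : R[X]) * X ^ (p.1 + 1))
  have hlast := sum_antidiagonal_succ' (n := n)
    (f := fun p => (n.choose (2 * p.2) : R[X]) * X ^ (p.1 + 1))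
  rw [Nat.choose_eq_zero_of_lt (by omega : n < 2 * (n + 1))] at hfirst
  simp only [Nat.cast_zero, zero_mul, zero_add] at hfirst
  simp only [mul_zero, mul_add, mul_one, Nat.choose_zero_right, Nat.cast_one, one_mul] at hlast
  rw [closedP, mul_sum]
  calc _ = ∑ p ∈ antidiagonal n, (n.choose (2 * p.2) : R[X]) * X ^ (p.1 + 1 + 1) :=
        sum_congr rfl fun p _ => by ring
    _ = _ := hfirst.symm.trans hlast

theorem closedP_succ (n : ℕ) :
    (closedP (n + 1) : R[X]) = X * closedP n + X * closedQ n := by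
  rw [closedP, sum_antidiagonal_succ', X_mul_closedP, closedQ, mul_sum]
  simp only [Nat.choose_zero_right, Nat.cast_one, one_mul, mul_zero, add_assoc]
  rw [← sum_add_distrib]
  congr 1
  refine sum_congr rfl fun p _ => ?_
  rw [show 2 * (p.2 + 1) = 2 * p.2 + 1 + 1 by ring, Nat.choose_succ_succ]
  push_cast
  ring

theorem eq_closed_of_recursion (P Q : ℕ → R[X]) (hP1 : P 1 = X) (hQ1 : Q 1 = 0)
    (hP : ∀ n, 1 ≤ n → P (n + 1) = X * P n + X * Q n)
    (hQ : ∀ n, 1 ≤ n → Q (n + 1) = P n + X * Q n) (n : ℕ) :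
    P (n + 1) = closedP n ∧ Q (n + 1) = closedQ n := by
  induction n with
  | zero => simp [closedP, closedQ, hP1, hQ1]
  | succ n ih =>
    rw [hP _ n.succ_pos, hQ _ n.succ_pos, ih.1, ih.2, closedP_succ, closedQ_succ]
    exact ⟨rfl, rfl⟩

theorem closedQ_two_mul_add_one (M : ℕ) :
    (closedQ (2 * M + 1) : R[X]) =
      ∑ ℓ ∈ range (M + 1), ((2 * M + 1).choose (2 * ℓ) : R[X]) * X ^ (M + 1 + ℓ) := by
  rw [closedQ, sum_antidiagonal_eq_sum_range_succ
      (fun i j => ((2 * M + 1).choose (2 * j + 1) : R[X]) * X ^ i),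
    show (2 * M + 1).succ = (M + 1) + (M + 1) by omega, sum_range_add]
  have hlow : ∀ k ∈ range (M + 1),
      ((2 * M + 1).choose (2 * (2 * M + 1 - k) + 1) : R[X]) * X ^ k = 0 := fun k hk => by
    rw [Nat.choose_eq_zero_of_lt (by simp at hk; omega), Nat.cast_zero, zero_mul]
  rw [sum_eq_zero hlow, zero_add]
  refine sum_congr rfl fun ℓ hℓ => ?_
  rw [mem_range] at hℓ
  rw [show 2 * (2 * M + 1 - (M + 1 + ℓ)) + 1 = 2 * M + 1 - 2 * ℓ by omega,
    Nat.choose_symm (by omega)]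

end ClosedForm

theorem Q_even_closed_form
    (P Q : ℕ → Polynomial ℂ)
    (hP1 : P 1 = X) (hQ1 : Q 1 = 0)
    (hP : ∀ n, 1 ≤ n → P (n + 1) = X * P n + X * Q n)
    (hQ : ∀ n, 1 ≤ n → Q (n + 1) = P n + X * Q n)
    (N : ℕ) (hN : 1 ≤ N) :
    Q (2 * N) = ∑ ℓ ∈ Finset.range N,
      (Nat.choose (2 * N - 1) (2 * ℓ) : Polynomial ℂ) * X ^ (N + ℓ) := by
  obtain ⟨M, rfl⟩ : ∃ M, N = M + 1 := ⟨N - 1, by omega⟩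
  rw [show 2 * (M + 1) = 2 * M + 1 + 1 by ring, Nat.add_sub_cancel,
    (eq_closed_of_recursion P Q hP1 hQ1 hP hQ _).2, closedQ_two_mul_add_one]
end

section
/- For any two projection operators f and g on a complex Hilbert space and any natural number N ≥ 1, ‖(f∘g + g∘f)^{2N}‖ ≤ 2·‖f∘g‖^{2N}·(1 + ‖f∘g‖)^{2N−1}. -/
/-! With `s = f + g` and `A = f g + g f = s² - s`, the quadratic form of `A` is
`2 Re ⟪g x, f x⟫ = 2 Re ⟪(f g) (g x), f x⟫`, bounded by
`‖f g‖ (‖f x‖² + ‖g x‖²) = ‖f g‖ ⟪s x, x⟫`; as `A` is self-adjoint this gives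
`‖A‖ ≤ ‖f g‖ ‖s‖`. The C*-identity `‖s‖² = ‖s + A‖` then yields `‖s‖ ≤ 1 + ‖f g‖`, so
`‖A‖ ≤ t (1 + t)` with `t = ‖f g‖ ≤ 1`, and one factor `1 + t` is at most `2`. -/

open ContinuousLinearMap

open RCLike

theorem IsSelfAdjoint.norm_le_one_add_of_norm_mul_self_sub_le {R : Type*} [NormedRing R]
    [StarRing R] [CStarRing R] {s : R} (hs : IsSelfAdjoint s) {c : ℝ} (hc : 0 ≤ c)
    (h : ‖s * s - s‖ ≤ c * ‖s‖) : ‖s‖ ≤ 1 + c := by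
  have hsq : ‖s‖ * ‖s‖ ≤ (1 + c) * ‖s‖ :=
    calc ‖s‖ * ‖s‖ = ‖s + (s * s - s)‖ := by rw [add_sub_cancel, hs.norm_mul_self, sq]
      _ ≤ ‖s‖ + c * ‖s‖ := (norm_add_le _ _).trans (by gcongr)
      _ = (1 + c) * ‖s‖ := by ring
  rcases (norm_nonneg s).eq_or_lt with hs0 | hs0
  · rw [← hs0]; positivity
  · exact le_of_mul_le_mul_right hsq hs0

namespace ContinuousLinearMap

variable {𝕜 E : Type*} [RCLike 𝕜] [NormedAddCommGroup E] [InnerProductSpace 𝕜 E]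

theorem opNorm_le_of_abs_re_inner_self_le {T : E →L[𝕜] E} (hT : (T : E →ₗ[𝕜] E).IsSymmetric)
    {C : ℝ} (hC : 0 ≤ C) (h : ∀ x, |re (inner 𝕜 (T x) x)| ≤ C * ‖x‖ ^ 2) : ‖T‖ ≤ C := by
  rw [T.norm_eq_iSup_rayleighQuotient hT]
  refine ciSup_le fun x => ?_
  rcases eq_or_ne x 0 with rfl | hx
  · simpa using hC
  · rw [rayleighQuotient, reApplyInnerSelf_apply, abs_div, abs_sq, div_le_iff₀ (by positivity)]
    exact h x

theorem norm_pow_le_pow_norm (T : E →L[𝕜] E) (n : ℕ) : ‖T ^ n‖ ≤ ‖T‖ ^ n := by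
  rcases Nat.eq_zero_or_pos n with rfl | hn
  · simpa [one_def] using norm_id_le
  · exact norm_pow_le' T hn

theorem _root_.IsIdempotentElem.apply_apply {T : E →L[𝕜] E} (hT : IsIdempotentElem T) (x : E) :
    T (T x) = T x :=
  congr($(hT.eq) x)

variable [CompleteSpace E] {p q : E →L[𝕜] E}

theorem _root_.IsSelfAdjoint.inner_apply_left {T : E →L[𝕜] E} (hT : IsSelfAdjoint T)
    (x y : E) :
    inner 𝕜 (T x) y = inner 𝕜 x (T y) :=
  hT.isSymmetric x y

theorem _root_.IsStarProjection.inner_apply_self (hp : IsStarProjection p) (x : E) :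
    inner 𝕜 (p x) x = ‖p x‖ ^ 2 := by
  rw [← inner_self_eq_norm_sq_to_K, ← hp.isSelfAdjoint.inner_apply_left,
    hp.isIdempotentElem.apply_apply]

theorem _root_.IsStarProjection.norm_mul_add_mul_le (hp : IsStarProjection p)
    (hq : IsStarProjection q) : ‖p * q + q * p‖ ≤ ‖p * q‖ * ‖p + q‖ := by
  have hsa : IsSelfAdjoint (p * q + q * p) := by
    simpa [star_mul, hp.isSelfAdjoint.star_eq, hq.isSelfAdjoint.star_eq] using
      IsSelfAdjoint.add_star_self (p * q)
  refine opNorm_le_of_abs_re_inner_self_le hsa.isSymmetric (by positivity) fun x => ?_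
  have hsplit :
      inner 𝕜 ((p * q + q * p) x) x = inner 𝕜 (q x) (p x) + inner 𝕜 (p x) (q x) := by
    rw [add_apply, inner_add_left, mul_apply_eq_comp, mul_apply_eq_comp,
      hp.isSelfAdjoint.inner_apply_left, hq.isSelfAdjoint.inner_apply_left (p x)]
  have hcross : ‖inner 𝕜 (q x) (p x)‖ ≤ ‖p * q‖ * (‖p x‖ * ‖q x‖) := by
    have : inner 𝕜 (q x) (p x) = inner 𝕜 ((p * q) (q x)) (p x) := by
      rw [mul_apply_eq_comp, hp.isSelfAdjoint.inner_apply_left, hp.isIdempotentElem.apply_apply,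
        hq.isIdempotentElem.apply_apply]
    calc ‖inner 𝕜 (q x) (p x)‖
      _ ≤ ‖(p * q) (q x)‖ * ‖p x‖ := this ▸ norm_inner_le_norm _ _
      _ ≤ ‖p * q‖ * ‖q x‖ * ‖p x‖ := by gcongr; exact le_opNorm _ _
      _ = ‖p * q‖ * (‖p x‖ * ‖q x‖) := by ring
  have hdiag : ‖p x‖ ^ 2 + ‖q x‖ ^ 2 ≤ ‖p + q‖ * ‖x‖ ^ 2 := by
    have : inner 𝕜 ((p + q) x) x = ((‖p x‖ ^ 2 + ‖q x‖ ^ 2 : ℝ) : 𝕜) := by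
      rw [add_apply, inner_add_left, hp.inner_apply_self, hq.inner_apply_self]; push_cast; rfl
    calc ‖p x‖ ^ 2 + ‖q x‖ ^ 2 = ‖inner 𝕜 ((p + q) x) x‖ := by
          rw [this, norm_ofReal, abs_of_nonneg (by positivity)]
      _ ≤ ‖(p + q) x‖ * ‖x‖ := norm_inner_le_norm _ _
      _ ≤ ‖p + q‖ * ‖x‖ * ‖x‖ := by gcongr; exact le_opNorm _ _
      _ = ‖p + q‖ * ‖x‖ ^ 2 := by ring
  calc |re (inner 𝕜 ((p * q + q * p) x) x)|
    _ ≤ ‖inner 𝕜 ((p * q + q * p) x) x‖ := abs_re_le_norm _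
    _ ≤ ‖inner 𝕜 (q x) (p x)‖ + ‖inner 𝕜 (p x) (q x)‖ := hsplit ▸ norm_add_le _ _
    _ = 2 * ‖inner 𝕜 (q x) (p x)‖ := by rw [norm_inner_symm (p x)]; ring
    _ ≤ ‖p * q‖ * (‖p x‖ ^ 2 + ‖q x‖ ^ 2) := by
      nlinarith [sq_nonneg (‖p x‖ - ‖q x‖), norm_nonneg (p * q)]
    _ ≤ ‖p * q‖ * (‖p + q‖ * ‖x‖ ^ 2) := by gcongr
    _ = ‖p * q‖ * ‖p + q‖ * ‖x‖ ^ 2 := by ring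

theorem _root_.IsStarProjection.norm_add_le_one_add_norm_mul (hp : IsStarProjection p)
    (hq : IsStarProjection q) : ‖p + q‖ ≤ 1 + ‖p * q‖ := by
  refine (hp.isSelfAdjoint.add hq.isSelfAdjoint).norm_le_one_add_of_norm_mul_self_sub_le
    (norm_nonneg _) ?_
  have : (p + q) * (p + q) - (p + q) = p * q + q * p := by
    rw [add_mul, mul_add, mul_add, hp.isIdempotentElem.eq, hq.isIdempotentElem.eq]; abel
  exact this ▸ hp.norm_mul_add_mul_le hq

end ContinuousLinearMap

theorem mul_one_add_pow_le {t : ℝ} (ht0 : 0 ≤ t) (ht1 : t ≤ 1) (n : ℕ) :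
    (t * (1 + t)) ^ n ≤ 2 * t ^ n * (1 + t) ^ (n - 1) := by
  cases n with
  | zero => norm_num
  | succ m =>
    rw [mul_pow, Nat.add_sub_cancel, pow_succ' (1 + t)]
    have : 0 ≤ t ^ (m + 1) * (1 + t) ^ m := by positivity
    nlinarith

theorem anticommutator_even_pow_norm_le_general
    {H : Type*} [NormedAddCommGroup H] [InnerProductSpace ℂ H] [CompleteSpace H]
    (f g : H →L[ℂ] H)
    (hf : f ∘L f = f) (hf' : adjoint f = f)
    (hg : g ∘L g = g) (hg' : adjoint g = g)
    (N : ℕ) :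
    ‖(f ∘L g + g ∘L f) ^ (2 * N)‖ ≤
      2 * ‖f ∘L g‖ ^ (2 * N) * (1 + ‖f ∘L g‖) ^ (2 * N - 1) := by
  have hp : IsStarProjection f := ⟨hf, hf'⟩
  have hq : IsStarProjection g := ⟨hg, hg'⟩
  have ht1 : ‖f * g‖ ≤ 1 :=
    (norm_mul_le f g).trans <|
      mul_le_one₀ (IsStarProjection.norm_le f hp) (norm_nonneg g) (IsStarProjection.norm_le g hq)
  have hA : ‖f * g + g * f‖ ≤ ‖f * g‖ * (1 + ‖f * g‖) :=
    (hp.norm_mul_add_mul_le hq).trans (by gcongr; exact hp.norm_add_le_one_add_norm_mul hq)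
  calc ‖(f * g + g * f) ^ (2 * N)‖ ≤ ‖f * g + g * f‖ ^ (2 * N) := norm_pow_le_pow_norm _ _
    _ ≤ (‖f * g‖ * (1 + ‖f * g‖)) ^ (2 * N) := by gcongr
    _ ≤ _ := mul_one_add_pow_le (norm_nonneg _) ht1 _

theorem anticommutator_even_pow_norm_le
    {H : Type*} [NormedAddCommGroup H] [InnerProductSpace ℂ H] [CompleteSpace H]
    (f g : H →L[ℂ] H)
    (hf : f ∘L f = f) (hf' : adjoint f = f)
    (hg : g ∘L g = g) (hg' : adjoint g = g)
    (N : ℕ) (hN : 1 ≤ N) :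
    ‖(f ∘L g + g ∘L f) ^ (2 * N)‖ ≤
      2 * ‖f ∘L g‖ ^ (2 * N) * (1 + ‖f ∘L g‖) ^ (2 * N - 1) :=
  anticommutator_even_pow_norm_le_general f g hf hf' hg hg' N
end

section
/- Let F_n : ℝ → ℝ be defined by F₀(x) = 1, F₁(x) = 2x, and F_{n+1}(x) = 2x·F_n(x) + (x − x²)·F_{n−1}(x). Then for every natural number n ≥ 1, the function F_n is monotone increasing on the interval [0, ∞): for all 0 ≤ x ≤ y, F_n(x) ≤ F_n(y). -/
theorem F_monotone
    (F : ℕ → ℝ → ℝ)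
    (hF0 : ∀ x, F 0 x = 1) (hF1 : ∀ x, F 1 x = 2 * x)
    (hFrec : ∀ n x, F (n + 2) x = 2 * x * F (n + 1) x + (x - x ^ 2) * F n x)
    (n : ℕ) (hn : 1 ≤ n) :
    ∀ x y : ℝ, 0 ≤ x → x ≤ y → F n x ≤ F n y := by
  set g : ℕ → ℝ → ℝ := fun n x => F (n + 1) x - x * F n x with hg
  have key : ∀ m, ∀ x y : ℝ, 0 ≤ x → x ≤ y →
      F m x ≤ F m y ∧ g m x ≤ g m y ∧ 0 ≤ F m x ∧ 0 ≤ g m x := by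
    intro m
    induction m with
    | zero =>
      intro x y hx hxy
      have h0x : g 0 x = x := by simp [hg, hF0, hF1]; ring
      have h0y : g 0 y = y := by simp [hg, hF0, hF1]; ring
      refine ⟨by rw [hF0, hF0], by rw [h0x, h0y]; exact hxy,
        by rw [hF0]; norm_num, by rw [h0x]; exact hx⟩
    | succ k ih =>
      intro x y hx hxy
      have hy : (0:ℝ) ≤ y := le_trans hx hxy
      obtain ⟨hF, hG, hFp, hGp⟩ := ih x y hx hxy
      obtain ⟨_, _, hFpy, hGpy⟩ := ih y y hy le_rfl
      have eFx : F (k + 1) x = x * F k x + g k x := by simp [hg]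
      have eFy : F (k + 1) y = y * F k y + g k y := by simp [hg]
      have eGx : g (k + 1) x = x * g k x + x * F k x := by
        simp only [hg]; rw [hFrec]; try ring
      have eGy : g (k + 1) y = y * g k y + y * F k y := by
        simp only [hg]; rw [hFrec]; try ring
      have h1 : x * F k x ≤ y * F k y := mul_le_mul hxy hF hFp hy
      have h2 : x * g k x ≤ y * g k y := mul_le_mul hxy hG hGp hy
      refine ⟨by rw [eFx, eFy]; linarith, by rw [eGx, eGy]; linarith,
        by rw [eFx]; positivity, by rw [eGx]; positivity⟩
  intro x y hx hxy
  exact (key n x y hx hxy).1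
end

section
/- For any two projection operators f and g on a complex Hilbert space and any natural number n ≥ 1, ‖(f∘g + g∘f)^n‖ ≥ (1/2)·‖f∘g‖^n·[(‖f∘g‖ + 1)^{n+1} − (‖f∘g‖ − 1)^{n+1}]. -/
set_option linter.unusedSectionVars false

open ContinuousLinearMap Polynomial

/-- The pair of polynomials `(x_m, y_m)` with `S^(m+1) f = x_m(A) f + g y_m(A) f`
where `S = fg + gf` and `A = fgf`. -/
noncomputable def acP : ℕ → Polynomial ℝ × Polynomial ℝ
  | 0 => (X, 1)
  | m + 1 => (X * ((acP m).1 + (acP m).2), (acP m).1 + X * (acP m).2)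

lemma acP_fst_dvd : ∀ m, X ∣ (acP m).1
  | 0 => dvd_rfl
  | m + 1 => ⟨(acP m).1 + (acP m).2, rfl⟩

section ops

variable {R : Type*} [Ring R] [Algebra ℝ R] {f g : R}

lemma proj_Af (hf : f * f = f) : f * g * f * f = f * g * f := by
  rw [mul_assoc, hf]

lemma proj_fA (hf : f * f = f) : f * (f * g * f) = f * g * f := by
  simp only [← mul_assoc, hf]

lemma proj_fgA (hf : f * f = f) : f * g * (f * g * f) = (f * g * f) * (f * g * f) := by
  simp only [← mul_assoc]
  rw [proj_Af hf]

lemma pow_f (hf : f * f = f) (k : ℕ) :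
    f * ((f * g * f) ^ k * f) = (f * g * f) ^ k * f := by
  cases k with
  | zero => simp only [pow_zero, one_mul]; exact hf
  | succ k => rw [pow_succ']; simp only [← mul_assoc, hf]

lemma pow_fg (hf : f * f = f) (k : ℕ) :
    (f * g) * ((f * g * f) ^ k * f) = (f * g * f) ^ (k + 1) * f := by
  cases k with
  | zero => rw [pow_zero, one_mul, pow_one, proj_Af hf]
  | succ k =>
    rw [pow_succ' _ k, pow_succ' _ (k + 1), pow_succ' _ k]
    simp only [← mul_assoc]
    rw [proj_Af hf]

lemma aeval_f (hf : f * f = f) (p : ℝ[X]) :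
    f * (aeval (f * g * f) p * f) = aeval (f * g * f) p * f := by
  induction p using Polynomial.induction_on' with
  | add p q hp hq => simp only [map_add, add_mul, mul_add, hp, hq]
  | monomial k c =>
    simp only [aeval_monomial, ← Algebra.smul_def, smul_mul_assoc, mul_smul_comm, pow_f hf]

lemma aeval_fg (hf : f * f = f) (p : ℝ[X]) :
    (f * g) * (aeval (f * g * f) p * f) = aeval (f * g * f) (X * p) * f := by
  induction p using Polynomial.induction_on' with
  | add p q hp hq => simp only [map_add, add_mul, mul_add, hp, hq]
  | monomial k c =>
    rw [X_mul_monomial]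
    simp only [aeval_monomial, ← Algebra.smul_def, smul_mul_assoc, mul_smul_comm, pow_fg hf]

lemma aeval_gf (hf : f * f = f) (p : ℝ[X]) :
    (g * f) * (aeval (f * g * f) p * f) = g * (aeval (f * g * f) p * f) := by
  rw [mul_assoc, aeval_f hf]

lemma fg_g (hg : g * g = g) (Z : R) : (f * g) * (g * Z) = (f * g) * Z := by
  rw [← mul_assoc, mul_assoc f g g, hg]

lemma gf_g (Z : R) : (g * f) * (g * Z) = g * ((f * g) * Z) := by
  rw [← mul_assoc, mul_assoc g f g, mul_assoc]

lemma Spow (hf : f * f = f) (hg : g * g = g) (m : ℕ) :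
    (f * g + g * f) ^ (m + 1) * f =
      aeval (f * g * f) (acP m).1 * f + g * (aeval (f * g * f) (acP m).2 * f) := by
  induction m with
  | zero =>
    show (f * g + g * f) ^ 1 * f = aeval (f * g * f) X * f + g * (aeval (f * g * f) 1 * f)
    simp only [pow_one, aeval_X, map_one, one_mul, add_mul, mul_assoc, hf]
  | succ m ih =>
    rw [pow_succ', mul_assoc, ih]
    show _ = aeval (f * g * f) (X * ((acP m).1 + (acP m).2)) * f +
      g * (aeval (f * g * f) ((acP m).1 + X * (acP m).2) * f)
    simp only [mul_add, add_mul, fg_g hg, gf_g, aeval_fg hf, aeval_gf hf, map_add]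
    abel

lemma corner (hf : f * f = f) (hg : g * g = g) (m : ℕ) :
    f * ((f * g + g * f) ^ (m + 1) * f) =
      aeval (f * g * f) ((acP m).1 + X * (acP m).2) := by
  obtain ⟨q, hq⟩ := acP_fst_dvd m
  have hqX : (acP m).1 + X * (acP m).2 = (q + (acP m).2) * X := by rw [hq]; ring
  rw [Spow hf hg m, mul_add, aeval_f hf, ← mul_assoc f g, aeval_fg hf, ← add_mul, ← map_add]
  rw [hqX, map_mul, aeval_X, mul_assoc, proj_Af hf]

end ops

lemma acP_eval (a : ℝ) (m : ℕ) :
    eval (a ^ 2) (acP m).1 =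
      a / 2 * ((a + 1) * (a ^ 2 + a) ^ m + (a - 1) * (a ^ 2 - a) ^ m) ∧
    eval (a ^ 2) (acP m).2 =
      1 / 2 * ((a + 1) * (a ^ 2 + a) ^ m - (a - 1) * (a ^ 2 - a) ^ m) := by
  induction m with
  | zero => simp only [acP, eval_X, eval_one]; constructor <;> ring
  | succ m ih =>
    obtain ⟨h1, h2⟩ := ih
    have e1' : (acP (m + 1)).1 = X * ((acP m).1 + (acP m).2) := rfl
    have e2' : (acP (m + 1)).2 = (acP m).1 + X * (acP m).2 := rfl
    refine ⟨?_, ?_⟩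
    · rw [e1', eval_mul, eval_add, eval_X, h1, h2, pow_succ, pow_succ]
      ring
    · rw [e2', eval_add, eval_mul, eval_X, h1, h2, pow_succ, pow_succ]
      ring

theorem anticommutator_pow_norm_ge
    {H : Type*} [NormedAddCommGroup H] [InnerProductSpace ℂ H] [CompleteSpace H]
    (f g : H →L[ℂ] H)
    (hf : f ∘L f = f) (hf' : adjoint f = f)
    (hg : g ∘L g = g) (hg' : adjoint g = g)
    (n : ℕ) (hn : 1 ≤ n) :
    ‖(f ∘L g + g ∘L f) ^ n‖ ≥
      (1 / 2) * ‖f ∘L g‖ ^ n *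
        ((‖f ∘L g‖ + 1) ^ (n + 1) - (‖f ∘L g‖ - 1) ^ (n + 1)) := by
  have hf2 : f * f = f := by rw [mul_def]; exact hf
  have hg2 : g * g = g := by rw [mul_def]; exact hg
  have hfs : star f = f := by rw [star_eq_adjoint]; exact hf'
  have hgs : star g = g := by rw [star_eq_adjoint]; exact hg'
  simp only [← mul_def]
  obtain ⟨m, rfl⟩ : ∃ m, n = m + 1 := ⟨n - 1, (Nat.succ_pred_eq_of_pos hn).symm⟩
  set a : ℝ := ‖f * g‖ with ha
  rcases eq_or_ne a 0 with h0 | h0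
  · rw [h0]
    rw [zero_pow (Nat.succ_ne_zero m)]
    simpa using norm_nonneg ((f * g + g * f) ^ (m + 1))
  -- nontriviality
  have hfg_ne : f * g ≠ 0 := fun h => h0 (by rw [ha, h, norm_zero])
  have : ∃ v : H, (f * g) v ≠ 0 := by
    by_contra hc
    push_neg at hc
    exact hfg_ne (by ext v; simpa using hc v)
  obtain ⟨v, hv⟩ := this
  haveI : Nontrivial H := nontrivial_of_ne _ _ hv
  -- A = fgf is positive with norm a², so a² is in its spectrum
  have hAeq : (f * g) * star (f * g) = f * g * f := by
    rw [star_mul, hfs, hgs, ← mul_assoc, mul_assoc f g g, hg2]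
  have hA0 : (0 : H →L[ℂ] H) ≤ f * g * f := by
    rw [← hAeq]
    simpa using star_mul_self_nonneg (star (f * g))
  have hAnorm : ‖f * g * f‖ = a * a := by
    rw [← hAeq, CStarRing.norm_self_mul_star]
  have hmem : a ^ 2 ∈ spectrum ℝ (f * g * f) := by
    rw [pow_two, ← hAnorm]
    exact CStarAlgebra.norm_mem_spectrum_of_nonneg hA0
  -- the corner identity and spectral bound
  set Q : Polynomial ℝ := (acP m).1 + X * (acP m).2 with hQ
  have hcorner : f * ((f * g + g * f) ^ (m + 1) * f) = aeval (f * g * f) Q :=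
    corner hf2 hg2 m
  have h2 : eval (a ^ 2) Q ∈ spectrum ℝ (aeval (f * g * f) Q) :=
    spectrum.subset_polynomial_aeval _ _ ⟨a ^ 2, hmem, rfl⟩
  have h3 : |eval (a ^ 2) Q| ≤ ‖aeval (f * g * f) Q‖ := by
    simpa [Real.norm_eq_abs] using spectrum.norm_le_norm_of_mem h2
  -- ‖f‖ ≤ 1
  have hfn : ‖f‖ = ‖f‖ * ‖f‖ := by
    have h := CStarRing.norm_star_mul_self (x := f)
    rwa [hfs, hf2] at h
  have hfle : ‖f‖ ≤ 1 := by nlinarith [norm_nonneg f]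
  have h4 : ‖aeval (f * g * f) Q‖ ≤ ‖(f * g + g * f) ^ (m + 1)‖ := by
    rw [← hcorner]
    have n1 := norm_mul_le f ((f * g + g * f) ^ (m + 1) * f)
    have n2 := norm_mul_le ((f * g + g * f) ^ (m + 1)) f
    have n3 := norm_nonneg ((f * g + g * f) ^ (m + 1))
    have n4 := norm_nonneg f
    nlinarith
  -- evaluate Q at a²
  obtain ⟨e1, e2⟩ := acP_eval a m
  have h5 : eval (a ^ 2) Q =
      1 / 2 * a ^ (m + 1) * ((a + 1) ^ (m + 1 + 1) - (a - 1) ^ (m + 1 + 1)) := by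
    rw [hQ, eval_add, eval_mul, eval_X, e1, e2]
    rw [show a ^ 2 + a = a * (a + 1) by ring, show a ^ 2 - a = a * (a - 1) by ring,
      mul_pow, mul_pow]
    ring
  have := le_abs_self (eval (a ^ 2) Q)
  linarith
end

section
/- For any two projection operators f and g on a complex Hilbert space, ‖f∘g − g∘f‖ = ‖f∘g − f∘g∘f‖. -/
/-!
Put `x = f g (1 - f)`. Self-adjointness of `f` and `g` gives `f g - g f = x - x*`. As `x` maps into
`ran f` and vanishes on `ran f`, the operator `x - x*` is off-diagonal with respect to
`H = ran f ⊕ ker f`, with blocks `x` and `-x*`; hence its norm is `max ‖x‖ ‖x*‖ = ‖x‖`.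
-/

open ContinuousLinearMap

theorem IsSelfAdjoint.commutator_eq_sub_star {R : Type*} [Ring R] [StarRing R] {f g : R}
    (hf : IsSelfAdjoint f) (hg : IsSelfAdjoint g) :
    f * g - g * f = (f * g - f * g * f) - star (f * g - f * g * f) := by
  simp only [star_sub, star_mul, hf.star_eq, hg.star_eq, mul_assoc]
  abel

theorem mul_self_eq_zero_of_mul_eq {R : Type*} [SemigroupWithZero R] {p x : R}
    (hpx : p * x = x) (hxp : x * p = 0) : x * x = 0 :=
  calc x * x = x * p * x := by rw [mul_assoc, hpx]
    _ = 0 := by rw [hxp, zero_mul]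

namespace ContinuousLinearMap

variable {𝕜 H : Type*} [RCLike 𝕜] [NormedAddCommGroup H] [InnerProductSpace 𝕜 H] [CompleteSpace H]

theorem IsStarProjection.norm_sq_eq_add_norm_sq_apply {p : H →L[𝕜] H} (hp : IsStarProjection p)
    (v : H) :
    ‖v‖ ^ 2 = ‖p v‖ ^ 2 + ‖v - p v‖ ^ 2 := by
  have hpp : p (p v) = p v := congr($(hp.isIdempotentElem.eq) v)
  have horth : inner 𝕜 (p v) (v - p v) = 0 := by
    rw [← adjoint_inner_right, ← star_eq_adjoint, hp.isSelfAdjoint.star_eq, map_sub, hpp, sub_self,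
      inner_zero_right]
  simp only [sq, ← norm_add_sq_eq_norm_sq_add_norm_sq_of_inner_eq_zero _ _ horth, add_sub_cancel]

theorem norm_sub_star_apply_sq {x : H →L[𝕜] H} (hx : x * x = 0) (v : H) :
    ‖(x - star x) v‖ ^ 2 = ‖x v‖ ^ 2 + ‖star x v‖ ^ 2 := by
  have horth : inner 𝕜 (x v) (-star x v) = 0 := by
    rw [inner_neg_right, star_eq_adjoint, adjoint_inner_right, ← mul_apply_eq_comp, hx, zero_apply,
      inner_zero_left, neg_zero]
  rw [sub_apply, sub_eq_add_neg, sq, norm_add_sq_eq_norm_sq_add_norm_sq_of_inner_eq_zero _ _ horth,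
    norm_neg, sq, sq]

theorem norm_le_norm_sub_star {x : H →L[𝕜] H} (hx : x * x = 0) : ‖x‖ ≤ ‖x - star x‖ :=
  opNorm_le_bound _ (norm_nonneg _) fun v ↦
    calc ‖x v‖ ≤ ‖(x - star x) v‖ := by
          refine le_of_pow_le_pow_left₀ two_ne_zero (norm_nonneg _) ?_
          rw [norm_sub_star_apply_sq hx]
          exact le_add_of_nonneg_right (sq_nonneg _)
      _ ≤ ‖x - star x‖ * ‖v‖ := le_opNorm _ _

variable {p x : H →L[𝕜] H}

theorem norm_sub_star_le (hp : IsStarProjection p) (hpx : p * x = x) (hxp : x * p = 0) :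
    ‖x - star x‖ ≤ ‖x‖ := by
  have hxx := mul_self_eq_zero_of_mul_eq hpx hxp
  have hxv (v : H) : x v = x (v - p v) := by
    rw [map_sub, ← mul_apply_eq_comp, hxp, zero_apply, sub_zero]
  have hxv' (v : H) : star x v = star x (p v) := by
    rw [← mul_apply_eq_comp, ← hp.isSelfAdjoint.star_eq, ← star_mul, hpx]
  refine opNorm_le_bound _ (norm_nonneg _) fun v ↦ le_of_pow_le_pow_left₀ two_ne_zero
    (by positivity) ?_
  calc ‖(x - star x) v‖ ^ 2 = ‖x (v - p v)‖ ^ 2 + ‖star x (p v)‖ ^ 2 := by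
        rw [norm_sub_star_apply_sq hxx, hxv, hxv']
    _ ≤ (‖x‖ * ‖v - p v‖) ^ 2 + (‖x‖ * ‖p v‖) ^ 2 := by
        gcongr
        · exact le_opNorm _ _
        · exact (le_opNorm _ _).trans_eq (by rw [norm_star x])
    _ = (‖x‖ * ‖v‖) ^ 2 := by
        rw [mul_pow, mul_pow, mul_pow, hp.norm_sq_eq_add_norm_sq_apply v]
        ring

theorem norm_sub_star_eq (hp : IsStarProjection p) (hpx : p * x = x) (hxp : x * p = 0) :
    ‖x - star x‖ = ‖x‖ :=
  (norm_sub_star_le hp hpx hxp).antisymm <|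
    norm_le_norm_sub_star (mul_self_eq_zero_of_mul_eq hpx hxp)

end ContinuousLinearMap

theorem commutator_norm_eq_general
    {H : Type*} [NormedAddCommGroup H] [InnerProductSpace ℂ H] [CompleteSpace H]
    (f g : H →L[ℂ] H)
    (hf : f ∘L f = f) (hf' : adjoint f = f)
    (hg' : adjoint g = g) :
    ‖f ∘L g - g ∘L f‖ = ‖f ∘L g - f ∘L g ∘L f‖ := by
  have hfp : IsStarProjection f := ⟨hf, isSelfAdjoint_iff'.mpr hf'⟩
  have hpx : f * (f * g - f * g * f) = f * g - f * g * f := by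
    simp only [mul_sub, ← mul_assoc, hfp.isIdempotentElem.eq]
  have hxp : (f * g - f * g * f) * f = 0 := by
    simp only [sub_mul, mul_assoc, hfp.isIdempotentElem.eq, sub_self]
  calc ‖f * g - g * f‖ = ‖(f * g - f * g * f) - star (f * g - f * g * f)‖ := by
        rw [hfp.isSelfAdjoint.commutator_eq_sub_star (isSelfAdjoint_iff'.mpr hg')]
    _ = ‖f * g - f * (g * f)‖ := by rw [norm_sub_star_eq hfp hpx hxp, mul_assoc]

theorem commutator_norm_eq
    {H : Type*} [NormedAddCommGroup H] [InnerProductSpace ℂ H] [CompleteSpace H]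
    (f g : H →L[ℂ] H)
    (hf : f ∘L f = f) (hf' : adjoint f = f)
    (hg : g ∘L g = g) (hg' : adjoint g = g) :
    ‖f ∘L g - g ∘L f‖ = ‖f ∘L g - f ∘L g ∘L f‖ :=
  commutator_norm_eq_general f g hf hf' hg'
end
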